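/- Minimizing over W_{ab} > 0 the function W_{ab} ↦ Σ_j (W H)_{aj} - Σ_j V_{aj}·(W^t_{ab}H_{bj}/(W^tH)_{aj})·log W_{ab} (other entries of W held fixed) yields the multiplicative update W_{ab} = W^t_{ab}·(Σ_j V_{aj}H_{bj}/(W^tH)_{aj}) / (Σ_j H_{bj}), provided Σ_j H_{bj} > 0. -/
import Mathlib


open Matrix

theorem stmt12 {N K M : ℕ}
    (V : Matrix (Fin N) (Fin M) ℝ) (H : Matrix (Fin K) (Fin M) ℝ)
    (Wt : Matrix (Fin N) (Fin K) ℝ)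
    (hV : ∀ i j, 0 < V i j) (hH : ∀ k j, 0 ≤ H k j)
    (hWt : ∀ i k, 0 < Wt i k)
    (a : Fin N) (b : Fin K) (hHb : 0 < ∑ j, H b j)
    (c d : ℝ) (hc : c = ∑ j, H b j)
    (hd : d = Wt a b * ∑ j, V a j * H b j / (Wt * H) a j)
    (φ : ℝ → ℝ) (hφ : ∀ t, φ t = c * t - d * Real.log t)
    (tstar : ℝ)
    (hts : tstar = Wt a b * (∑ j, V a j * H b j / (Wt * H) a j) / (∑ j, H b j)) :
    tstar = d / c ∧ ∀ t, 0 < t → φ tstar ≤ φ t := by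
  have hc' : 0 < c := hc ▸ hHb
  obtain ⟨j0, hj0⟩ : ∃ j, 0 < H b j := by
    by_contra h
    push_neg at h
    have : (∑ j, H b j) ≤ 0 := Finset.sum_nonpos (fun j _ => h j)
    linarith
  have hWH : 0 < (Wt * H) a j0 := by
    rw [Matrix.mul_apply]
    apply Finset.sum_pos' (fun k _ => mul_nonneg (hWt a k).le (hH k j0))
    exact ⟨b, Finset.mem_univ b, mul_pos (hWt a b) hj0⟩
  have hd' : 0 < d := by
    rw [hd]
    apply mul_pos (hWt a b)
    apply Finset.sum_pos' (fun j _ => ?_) ⟨j0, Finset.mem_univ j0,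
      div_pos (mul_pos (hV a j0) hj0) hWH⟩
    apply div_nonneg (mul_nonneg (hV a j).le (hH b j))
    rw [Matrix.mul_apply]
    exact Finset.sum_nonneg (fun k _ => mul_nonneg (hWt a k).le (hH k j))
  have hts' : tstar = d / c := by rw [hts, hd, hc]
  refine ⟨hts', fun t ht => ?_⟩
  rw [hφ, hφ, hts']
  have h1 : c * (d / c) = d := mul_div_cancel₀ d hc'.ne'
  have h2 : Real.log (d / c) = Real.log d - Real.log c :=
    Real.log_div hd'.ne' hc'.ne'
  have h3 : 0 < t * c / d := div_pos (mul_pos ht hc') hd'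
  have h4 : Real.log (t * c / d) ≤ t * c / d - 1 := Real.log_le_sub_one_of_pos h3
  have h5 : Real.log (t * c / d) = Real.log t + Real.log c - Real.log d := by
    rw [Real.log_div (mul_pos ht hc').ne' hd'.ne', Real.log_mul ht.ne' hc'.ne']
  have h6 : d * (t * c / d) = t * c := by field_simp
  nlinarith [mul_le_mul_of_nonneg_left h4 hd'.le]
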